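/- Let ω > 0 and c with c + ω > 0. Let u : ℝ × ℝ → ℝ be a smooth solution of the Camassa–Holm equation with parameter ω, and set m := u − u_xx. Assume: for each t, c − m(·,t) ∈ L¹(−∞,0] and m(·,t) ∈ L¹[0,∞); u(x,t) → c and u_x(x,t) → 0 as x → −∞; u(x,t) → 0 and u_x(x,t) → 0 as x → +∞; u(x,t) m(x,t) → c² as x → −∞ and u(x,t) m(x,t) → 0 as x → +∞; and for every compact time interval there is an integrable function dominating |m_t(x,t)| for all t in that interval, so that differentiation under the integral sign is justified. Then the quantity H₀(x,t) := ∫_{−∞}^x (c − m(r,t)) dr − ∫_x^{+∞} m(r,t) dr − c(x+1) + c(3c+4ω)t/2 is independent of both x and t. -/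

import Mathlib

open MeasureTheory Filter Set

noncomputable def pdx (f : ℝ → ℝ → ℝ) (x t : ℝ) : ℝ := deriv (fun x' => f x' t) x
noncomputable def pdt (f : ℝ → ℝ → ℝ) (x t : ℝ) : ℝ := deriv (fun t' => f x t') t

/-- `u` is a smooth solution of the Camassa–Holm equation with parameter `ω`. -/
def IsCHSolution (ω : ℝ) (u : ℝ → ℝ → ℝ) : Prop :=
  ContDiff ℝ (⊤ : ℕ∞) (Function.uncurry u) ∧
    ∀ x t : ℝ,
      pdt u x t - pdt (pdx (pdx u)) x t + 2 * ω * pdx u x t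
          + 3 * u x t * pdx u x t
        = 2 * pdx u x t * pdx (pdx u) x t + u x t * pdx (pdx (pdx u)) x t

lemma contDiff_pdx {u : ℝ → ℝ → ℝ} (h : ContDiff ℝ (⊤ : ℕ∞) (Function.uncurry u)) :
    ContDiff ℝ (⊤ : ℕ∞) (Function.uncurry (pdx u)) := by
  have h2 : ContDiff ℝ (⊤ : ℕ∞) (Function.uncurry (fun (p : ℝ × ℝ) (x' : ℝ) => u x' p.2)) :=
    h.comp (contDiff_snd.prodMk (contDiff_snd.comp contDiff_fst))
  have h3 := ContDiff.fderiv_apply (𝕜 := ℝ) (f := fun (p : ℝ × ℝ) (x' : ℝ) => u x' p.2)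
    (g := Prod.fst) (k := fun _ => 1) (n := (⊤ : ℕ∞)) h2 contDiff_fst contDiff_const (by simp)
  have : Function.uncurry (pdx u) = fun p : ℝ × ℝ =>
      fderiv ℝ (fun x' => u x' p.2) p.1 1 := by
    funext p
    simp [Function.uncurry, pdx, fderiv_apply_one_eq_deriv]
  rw [this]; exact h3

lemma slice_x {u : ℝ → ℝ → ℝ} (h : ContDiff ℝ (⊤ : ℕ∞) (Function.uncurry u)) (t : ℝ) :
    ContDiff ℝ (⊤ : ℕ∞) (fun x => u x t) :=
  h.comp (contDiff_id.prodMk contDiff_const)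

lemma slice_t {u : ℝ → ℝ → ℝ} (h : ContDiff ℝ (⊤ : ℕ∞) (Function.uncurry u)) (x : ℝ) :
    ContDiff ℝ (⊤ : ℕ∞) (fun t => u x t) :=
  h.comp (contDiff_const.prodMk contDiff_id)

lemma hasDerivAt_pdx {u : ℝ → ℝ → ℝ} (h : ContDiff ℝ (⊤ : ℕ∞) (Function.uncurry u)) (x t : ℝ) :
    HasDerivAt (fun x' => u x' t) (pdx u x t) x :=
  (((slice_x h t).differentiable (by simp)) x).hasDerivAt

lemma hasDerivAt_pdt {u : ℝ → ℝ → ℝ} (h : ContDiff ℝ (⊤ : ℕ∞) (Function.uncurry u)) (x t : ℝ) :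
    HasDerivAt (fun t' => u x t') (pdt u x t) t :=
  (((slice_t h x).differentiable (by simp)) t).hasDerivAt

lemma intIic {f : ℝ → ℝ} (hf : Continuous f) (h : IntegrableOn f (Iic 0)) (x : ℝ) :
    IntegrableOn f (Iic x) := by
  rcases le_total x 0 with hx | hx
  · exact h.mono_set (Iic_subset_Iic.mpr hx)
  · refine (h.union (hf.integrableOn_Icc (a := 0) (b := x))).mono_set ?_
    intro y hy
    rcases le_total y 0 with h0 | h0
    · exact Or.inl h0
    · exact Or.inr ⟨h0, hy⟩

lemma intIci {f : ℝ → ℝ} (hf : Continuous f) (h : IntegrableOn f (Ici 0)) (x : ℝ) :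
    IntegrableOn f (Ici x) := by
  rcases le_total 0 x with hx | hx
  · exact h.mono_set (Ici_subset_Ici.mpr hx)
  · refine ((hf.integrableOn_Icc (a := x) (b := 0)).union h).mono_set ?_
    intro y hy
    rcases le_total y 0 with h0 | h0
    · exact Or.inl ⟨hy, h0⟩
    · exact Or.inr h0

lemma Hx (c : ℝ) (f : ℝ → ℝ) (hmc : Continuous f)
    (hl : IntegrableOn (fun r => c - f r) (Iic 0)) (hr : IntegrableOn f (Ici 0))
    (a b : ℝ) (hab : a ≤ b) :
    (∫ r in Iic b, (c - f r)) - (∫ r in Ici b, f r) - c * (b + 1)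
      = (∫ r in Iic a, (c - f r)) - (∫ r in Ici a, f r) - c * (a + 1) := by
  have hcf : Continuous (fun r => c - f r) := continuous_const.sub hmc
  have h1 : (∫ r in Iic b, (c - f r))
      = (∫ r in Iic a, (c - f r)) + ∫ r in Ioc a b, (c - f r) := by
    rw [← setIntegral_union (Iic_disjoint_Ioc le_rfl) measurableSet_Ioc
      ((intIic hcf hl a)) (hcf.integrableOn_Ioc), Iic_union_Ioc_eq_Iic hab]
  have h2 : (∫ r in Ici a, f r) = (∫ r in Ico a b, f r) + ∫ r in Ici b, f r := by
    rw [← setIntegral_union (by rw [Set.disjoint_left]; rintro y ⟨_, h2⟩ h3; exact absurd h3 (not_le.2 h2)) measurableSet_Ici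
      (((hmc.integrableOn_Icc).mono_set Ico_subset_Icc_self)) ((intIci hmc hr b)), Ico_union_Ici_eq_Ici hab]
  have h3 : (∫ r in Ioc a b, (c - f r)) = c * (b - a) - ∫ r in Ioo a b, f r := by
    rw [integral_Ioc_eq_integral_Ioo, integral_sub (integrableOn_const (s := Ioo a b) (μ := volume) (C := c) (by
      simp [Real.volume_Ioo])) (((hmc.integrableOn_Icc).mono_set Ioo_subset_Icc_self))]
    congr 1
    rw [setIntegral_const, measureReal_def, Real.volume_Ioo, ENNReal.toReal_ofReal (by linarith), smul_eq_mul,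
      mul_comm]
  have h4 : (∫ r in Ico a b, f r) = ∫ r in Ioo a b, f r := integral_Ico_eq_integral_Ioo
  rw [h1, h2, h3, h4]; ring

/-- conservation of
`H₀(x,t) = ∫_{−∞}^x (c − m) − ∫_x^{+∞} m − c(x+1) + c(3c+4ω)t/2`
for a step-like CH solution. -/
theorem stmt_13 (ω c : ℝ) (hω : 0 < ω) (hc : 0 < c + ω)
    (u : ℝ → ℝ → ℝ) (hu : IsCHSolution ω u)
    (m : ℝ → ℝ → ℝ) (hm : ∀ x t, m x t = u x t - pdx (pdx u) x t)
    (hint_l : ∀ t, IntegrableOn (fun r => c - m r t) (Iic (0 : ℝ)))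
    (hint_r : ∀ t, IntegrableOn (fun r => m r t) (Ici (0 : ℝ)))
    (hu_bot : ∀ t, Tendsto (fun x => u x t) atBot (nhds c))
    (hux_bot : ∀ t, Tendsto (fun x => pdx u x t) atBot (nhds 0))
    (hu_top : ∀ t, Tendsto (fun x => u x t) atTop (nhds 0))
    (hux_top : ∀ t, Tendsto (fun x => pdx u x t) atTop (nhds 0))
    (hum_bot : ∀ t, Tendsto (fun x => u x t * m x t) atBot (nhds (c ^ 2)))
    (hum_top : ∀ t, Tendsto (fun x => u x t * m x t) atTop (nhds 0))
    (hdom : ∀ a b : ℝ, ∃ g : ℝ → ℝ, Integrable g ∧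
      ∀ t ∈ Icc a b, ∀ x : ℝ, |pdt m x t| ≤ g x)
    (H₀ : ℝ → ℝ → ℝ)
    (hH₀ : ∀ x t, H₀ x t = (∫ r in Iic x, (c - m r t))
        - (∫ r in Ici x, m r t) - c * (x + 1) + c * (3 * c + 4 * ω) * t / 2) :
    ∀ x t x' t' : ℝ, H₀ x t = H₀ x' t' := by
  obtain ⟨huu, hpde⟩ := hu
  have hs1 := contDiff_pdx huu
  have hs2 := contDiff_pdx hs1
  have hs3 := contDiff_pdx hs2
  have hmsm : ContDiff ℝ (⊤ : ℕ∞) (Function.uncurry m) := by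
    have he : Function.uncurry m = fun p : ℝ × ℝ =>
        Function.uncurry u p - Function.uncurry (pdx (pdx u)) p := funext fun p => hm p.1 p.2
    rw [he]; exact huu.sub hs2
  -- expression for `pdt m`
  have pdtm_eq : ∀ r t, pdt m r t
      = 2 * pdx u r t * pdx (pdx u) r t + u r t * pdx (pdx (pdx u)) r t
        - 2 * ω * pdx u r t - 3 * u r t * pdx u r t := by
    intro r t
    have h1 := hasDerivAt_pdt huu r t
    have h2 := hasDerivAt_pdt hs2 r t
    have h3 : HasDerivAt (fun t' => m r t') (pdt u r t - pdt (pdx (pdx u)) r t) t := by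
      have he : (fun t' => m r t') = fun t' => u r t' - pdx (pdx u) r t' :=
        funext fun t' => hm r t'
      rw [he]; exact h1.sub h2
    have h4 : pdt m r t = pdt u r t - pdt (pdx (pdx u)) r t := h3.deriv
    have := hpde r t
    rw [h4]; linarith
  have hcont_pdtm : ∀ t, Continuous fun r => pdt m r t := by
    intro t
    have he : (fun r => pdt m r t) = fun r =>
        2 * pdx u r t * pdx (pdx u) r t + u r t * pdx (pdx (pdx u)) r t
          - 2 * ω * pdx u r t - 3 * u r t * pdx u r t := funext fun r => pdtm_eq r t
    rw [he]
    have c0 := (slice_x huu t).continuous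
    have c1 := (slice_x hs1 t).continuous
    have c2 := (slice_x hs2 t).continuous
    have c3 := (slice_x hs3 t).continuous
    exact ((((continuous_const.mul c1).mul c2).add (c0.mul c3)).sub
      (continuous_const.mul c1)).sub ((continuous_const.mul c0).mul c1)
  -- `pdt m` is minus the x-derivative of the flux `F`
  have hFd : ∀ t r, HasDerivAt
      (fun r' => -(u r' t * m r' t + u r' t * u r' t / 2
          - pdx u r' t * pdx u r' t / 2 + 2 * ω * u r' t)) (pdt m r t) r := by
    intro t r
    have h0 := hasDerivAt_pdx huu r t
    have h1 := hasDerivAt_pdx hs1 r t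
    have h2 := hasDerivAt_pdx hs2 r t
    have hms : HasDerivAt (fun r' => m r' t) (pdx u r t - pdx (pdx (pdx u)) r t) r := by
      have he : (fun r' => m r' t) = fun r' => u r' t - pdx (pdx u) r' t :=
        funext fun r' => hm r' t
      rw [he]; exact h0.sub h2
    have hD := ((((h0.mul hms).add ((h0.mul h0).div_const 2)).sub
      ((h1.mul h1).div_const 2)).add (h0.const_mul (2 * ω))).neg
    refine hD.congr_deriv ?_
    rw [hm r t, pdtm_eq r t]; ring
  -- limits of the flux
  have hFbot : ∀ t, Tendsto (fun r => -(u r t * m r t + u r t * u r t / 2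
      - pdx u r t * pdx u r t / 2 + 2 * ω * u r t)) atBot
      (nhds (-(c * (3 * c + 4 * ω) / 2))) := by
    intro t
    have h := ((((hum_bot t).add (((hu_bot t).mul (hu_bot t)).div_const 2)).sub
      (((hux_bot t).mul (hux_bot t)).div_const 2)).add ((hu_bot t).const_mul (2 * ω))).neg
    have he : -(c ^ 2 + c * c / 2 - 0 * 0 / 2 + 2 * ω * c) = -(c * (3 * c + 4 * ω) / 2) := by
      ring
    rw [← he]; exact h
  have hFtop : ∀ t, Tendsto (fun r => -(u r t * m r t + u r t * u r t / 2
      - pdx u r t * pdx u r t / 2 + 2 * ω * u r t)) atTop (nhds 0) := by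
    intro t
    have h := ((((hum_top t).add (((hu_top t).mul (hu_top t)).div_const 2)).sub
      (((hux_top t).mul (hux_top t)).div_const 2)).add ((hu_top t).const_mul (2 * ω))).neg
    have he : -(0 + 0 * 0 / 2 - 0 * 0 / 2 + 2 * ω * 0) = (0 : ℝ) := by ring
    rw [← he]; exact h
  -- integrability of `pdt m`
  have hInt : ∀ t, Integrable (fun r => pdt m r t) := by
    intro t
    obtain ⟨g, hg, hgb⟩ := hdom t t
    exact hg.mono' (hcont_pdtm t).aestronglyMeasurable
      (Eventually.of_forall fun r => by
        rw [Real.norm_eq_abs]; exact hgb t ⟨le_rfl, le_rfl⟩ r)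
  set F0 : ℝ → ℝ := fun t => u 0 t * m 0 t + u 0 t * u 0 t / 2
      - pdx u 0 t * pdx u 0 t / 2 + 2 * ω * u 0 t with hF0
  have hIic : ∀ t, (∫ r in Iic (0 : ℝ), pdt m r t) = -(F0 t) + c * (3 * c + 4 * ω) / 2 := by
    intro t
    have h := integral_Iic_of_hasDerivAt_of_tendsto' (a := (0 : ℝ))
      (f' := fun r => pdt m r t) (fun r _ => hFd t r) (hInt t).integrableOn (hFbot t)
    rw [h]; simp [hF0]
  have hIci : ∀ t, (∫ r in Ici (0 : ℝ), pdt m r t) = F0 t := by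
    intro t
    have h := integral_Ioi_of_hasDerivAt_of_tendsto' (a := (0 : ℝ))
      (f' := fun r => pdt m r t) (fun r _ => hFd t r) (hInt t).integrableOn (hFtop t)
    rw [integral_Ici_eq_integral_Ioi, h]; simp [hF0]
  -- the map `t ↦ H₀ 0 t` has zero derivative
  have hder : ∀ t₀, HasDerivAt (fun s => H₀ 0 s) 0 t₀ := by
    intro t₀
    obtain ⟨g₁, hg₁, hgb₁⟩ := hdom (t₀ - 1) (t₀ + 1)
    have hball : ∀ s ∈ Metric.ball t₀ 1, s ∈ Icc (t₀ - 1) (t₀ + 1) := by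
      intro s hs
      have := abs_sub_lt_iff.1 (by simpa [Real.dist_eq] using hs)
      constructor <;> linarith [this.1, this.2]
    have hd1 : HasDerivAt (fun s => ∫ a in Iic (0 : ℝ), (c - m a s))
        (∫ a in Iic (0 : ℝ), -(pdt m a t₀)) t₀ := by
      exact (hasDerivAt_integral_of_dominated_loc_of_deriv_le
        (μ := volume.restrict (Iic (0 : ℝ))) (F := fun s a => c - m a s)
        (F' := fun s a => -(pdt m a s)) (bound := g₁) (Metric.ball_mem_nhds t₀ one_pos)
        (Eventually.of_forall fun s =>
          (continuous_const.sub (slice_x hmsm s).continuous).aestronglyMeasurable)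
        (hint_l t₀) ((hcont_pdtm t₀).neg.aestronglyMeasurable)
        (Eventually.of_forall fun a s hs => by
          rw [norm_neg, Real.norm_eq_abs]; exact hgb₁ s (hball s hs) a)
        hg₁.restrict
        (Eventually.of_forall fun a s hs => (hasDerivAt_pdt hmsm a s).const_sub c)).2
    have hd2 : HasDerivAt (fun s => ∫ a in Ici (0 : ℝ), m a s)
        (∫ a in Ici (0 : ℝ), pdt m a t₀) t₀ := by
      exact (hasDerivAt_integral_of_dominated_loc_of_deriv_le
        (μ := volume.restrict (Ici (0 : ℝ))) (F := fun s a => m a s)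
        (F' := fun s a => pdt m a s) (bound := g₁) (Metric.ball_mem_nhds t₀ one_pos)
        (Eventually.of_forall fun s => (slice_x hmsm s).continuous.aestronglyMeasurable)
        (hint_r t₀) ((hcont_pdtm t₀).aestronglyMeasurable)
        (Eventually.of_forall fun a s hs => by
          rw [Real.norm_eq_abs]; exact hgb₁ s (hball s hs) a)
        hg₁.restrict
        (Eventually.of_forall fun a s hs => hasDerivAt_pdt hmsm a s)).2
    have hlin : HasDerivAt (fun s => c * (3 * c + 4 * ω) * s / 2)
        (c * (3 * c + 4 * ω) / 2) t₀ := by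
      simpa using ((hasDerivAt_id t₀).const_mul (c * (3 * c + 4 * ω))).div_const 2
    have hcomb := ((hd1.sub hd2).sub_const (c * ((0 : ℝ) + 1))).add hlin
    have he : (fun s => H₀ 0 s) = fun s =>
        ((∫ a in Iic (0 : ℝ), (c - m a s)) - (∫ a in Ici (0 : ℝ), m a s)
          - c * ((0 : ℝ) + 1)) + c * (3 * c + 4 * ω) * s / 2 :=
      funext fun s => by rw [hH₀ 0 s]
    rw [he]
    refine hcomb.congr_deriv ?_
    rw [integral_neg, hIic t₀, hIci t₀]
    ring
  -- conclusion
  have hconst : ∀ s s', H₀ 0 s = H₀ 0 s' := fun s s' =>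
    is_const_of_deriv_eq_zero (fun t => (hder t).differentiableAt)
      (fun t => (hder t).deriv) s s'
  have keyx : ∀ s a, H₀ a s = H₀ 0 s := by
    intro s a
    have hcm : Continuous (fun r => m r s) := (slice_x hmsm s).continuous
    rcases le_total a 0 with h | h
    · have := Hx c (fun r => m r s) hcm (hint_l s) (hint_r s) a 0 h
      rw [hH₀ a s, hH₀ 0 s]; linarith
    · have := Hx c (fun r => m r s) hcm (hint_l s) (hint_r s) 0 a h
      rw [hH₀ a s, hH₀ 0 s]; linarith
  intro x t x' t'
  rw [keyx t x, keyx t' x', hconst t t']
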